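/- arXiv:2110.00813 — 6 statements merged into one kernel-verified Lean document; each statement's English description precedes it below -/
import Mathlib

section
/- Consider a finite domain partitioned into two groups T and S with positive population masses μ_T, μ_S and positive base rates β_T, β_S. Let m_{x,g} = P(X=x | G=g), m¹_{x,g} = P(X=x | Y=1, G=g), and for a predictor difference Δ : X × {S,T} → ℝ define L = μ_T·∑_x m_{x,T}·Δ(x,T)² + μ_S·∑_x m_{x,S}·Δ(x,S)², and I = ∑_x m¹_{x,T}·Δ(x,T) − ∑_x m¹_{x,S}·Δ(x,S). Let μ = min(μ_S, μ_T) and β = min(β_S, β_T). Then I ≤ sqrt(2L/(μβ)). -/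
/-- Total probability mass of event `A` in a finite probability space with weights `p`. -/
noncomputable def prMass {Ω : Type*} [Fintype Ω] (p : Ω → ℝ) (A : Ω → Prop)
    [DecidablePred A] : ℝ :=
  ∑ ω, if A ω then p ω else 0

/-- Conditional probability `P(A | B)`. -/
noncomputable def condPr {Ω : Type*} [Fintype Ω] (p : Ω → ℝ) (A B : Ω → Prop)
    [DecidablePred A] [DecidablePred B] : ℝ :=
  prMass p (fun ω => A ω ∧ B ω) / prMass p B


lemma my_prMass_nonneg {Ω : Type*} [Fintype Ω] (p : Ω → ℝ) (A : Ω → Prop)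
    [DecidablePred A] (hp : ∀ ω, 0 ≤ p ω) : 0 ≤ prMass p A := by
  refine Finset.sum_nonneg fun ω _ => ?_
  split <;> simp [hp ω]

lemma my_prMass_mono {Ω : Type*} [Fintype Ω] (p : Ω → ℝ) (A B : Ω → Prop)
    [DecidablePred A] [DecidablePred B] (hp : ∀ ω, 0 ≤ p ω)
    (h : ∀ ω, A ω → B ω) : prMass p A ≤ prMass p B := by
  refine Finset.sum_le_sum fun ω _ => ?_
  by_cases hA : A ω <;> by_cases hB : B ω <;> simp_all [hp ω]

lemma my_sum_fiber {Ω 𝒳 : Type*} [Fintype Ω] [Fintype 𝒳] [DecidableEq 𝒳]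
    (p : Ω → ℝ) (Xv : Ω → 𝒳) (B : Ω → Prop) [DecidablePred B] :
    ∑ x, prMass p (fun ω => Xv ω = x ∧ B ω) = prMass p B := by
  unfold prMass
  rw [Finset.sum_comm]
  refine Finset.sum_congr rfl fun ω _ => ?_
  by_cases hB : B ω <;> simp [hB]

lemma my_cs {𝒳 : Type*} [Fintype 𝒳] (w d : 𝒳 → ℝ) (hw : ∀ x, 0 ≤ w x) :
    (∑ x, w x * d x) ^ 2 ≤ (∑ x, w x) * ∑ x, w x * d x ^ 2 := by
  have h := Finset.sum_mul_sq_le_sq_mul_sq Finset.univ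
    (fun x => Real.sqrt (w x)) (fun x => Real.sqrt (w x) * d x)
  calc (∑ x, w x * d x) ^ 2
      = (∑ x, Real.sqrt (w x) * (Real.sqrt (w x) * d x)) ^ 2 := by
        congr 1
        refine Finset.sum_congr rfl fun x _ => ?_
        rw [← mul_assoc, Real.mul_self_sqrt (hw x)]
    _ ≤ (∑ x, Real.sqrt (w x) ^ 2) * ∑ x, (Real.sqrt (w x) * d x) ^ 2 := h
    _ = (∑ x, w x) * ∑ x, w x * d x ^ 2 := by
        congr 1
        · exact Finset.sum_congr rfl fun x _ => Real.sq_sqrt (hw x)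
        · refine Finset.sum_congr rfl fun x _ => ?_
          rw [mul_pow, Real.sq_sqrt (hw x)]

lemma my_sqrt_add {x y : ℝ} (hx : 0 ≤ x) (hy : 0 ≤ y) :
    Real.sqrt x + Real.sqrt y ≤ Real.sqrt (2 * (x + y)) := by
  have h : (Real.sqrt x + Real.sqrt y) ^ 2 ≤ 2 * (x + y) := by
    nlinarith [Real.sq_sqrt hx, Real.sq_sqrt hy, sq_nonneg (Real.sqrt x - Real.sqrt y)]
  calc Real.sqrt x + Real.sqrt y
      = Real.sqrt ((Real.sqrt x + Real.sqrt y) ^ 2) := by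
        rw [Real.sqrt_sq (by positivity)]
    _ ≤ Real.sqrt (2 * (x + y)) := Real.sqrt_le_sqrt h

lemma my_key {𝒳 : Type*} [Fintype 𝒳] (uT vT uS vS : 𝒳 → ℝ) (μT μS nT nS : ℝ)
    (ΔT ΔS : 𝒳 → ℝ)
    (hμT : 0 < μT) (hμS : 0 < μS) (hnT : 0 < nT) (hnS : 0 < nS)
    (huT0 : ∀ x, 0 ≤ uT x) (huvT : ∀ x, uT x ≤ vT x) (husumT : ∑ x, uT x = nT)
    (huS0 : ∀ x, 0 ≤ uS x) (huvS : ∀ x, uS x ≤ vS x) (husumS : ∑ x, uS x = nS) :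
    (∑ x, uT x / nT * ΔT x) - (∑ x, uS x / nS * ΔS x) ≤
    Real.sqrt (2 * (μT * ∑ x, vT x / μT * ΔT x ^ 2 + μS * ∑ x, vS x / μS * ΔS x ^ 2) /
      (min μS μT * min (nS / μS) (nT / μT))) := by
  set QT := ∑ x, uT x / nT * ΔT x ^ 2 with hQTdef
  set QS := ∑ x, uS x / nS * ΔS x ^ 2 with hQSdef
  set AT := ∑ x, vT x / μT * ΔT x ^ 2 with hATdef
  set AS := ∑ x, vS x / μS * ΔS x ^ 2 with hASdef
  have hQT0 : 0 ≤ QT := Finset.sum_nonneg fun x _ =>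
    mul_nonneg (div_nonneg (huT0 x) hnT.le) (sq_nonneg _)
  have hQS0 : 0 ≤ QS := Finset.sum_nonneg fun x _ =>
    mul_nonneg (div_nonneg (huS0 x) hnS.le) (sq_nonneg _)
  have hvT0 : ∀ x, 0 ≤ vT x := fun x => le_trans (huT0 x) (huvT x)
  have hvS0 : ∀ x, 0 ≤ vS x := fun x => le_trans (huS0 x) (huvS x)
  have hAT0 : 0 ≤ AT := Finset.sum_nonneg fun x _ =>
    mul_nonneg (div_nonneg (hvT0 x) hμT.le) (sq_nonneg _)
  have hAS0 : 0 ≤ AS := Finset.sum_nonneg fun x _ =>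
    mul_nonneg (div_nonneg (hvS0 x) hμS.le) (sq_nonneg _)
  -- step 1: each partial sum bounded by sqrt Q
  have hwsumT : ∑ x, uT x / nT = 1 := by
    rw [← Finset.sum_div, husumT, div_self hnT.ne']
  have hwsumS : ∑ x, uS x / nS = 1 := by
    rw [← Finset.sum_div, husumS, div_self hnS.ne']
  have haT : (∑ x, uT x / nT * ΔT x) ≤ Real.sqrt QT := by
    have h2 : (∑ x, uT x / nT * ΔT x) ^ 2 ≤ QT := by
      have := my_cs (fun x => uT x / nT) ΔT (fun x => by have := huT0 x; positivity)
      simpa [hwsumT] using this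
    calc (∑ x, uT x / nT * ΔT x) ≤ |∑ x, uT x / nT * ΔT x| := le_abs_self _
      _ = Real.sqrt ((∑ x, uT x / nT * ΔT x) ^ 2) := (Real.sqrt_sq_eq_abs _).symm
      _ ≤ Real.sqrt QT := Real.sqrt_le_sqrt h2
  have haS : -(∑ x, uS x / nS * ΔS x) ≤ Real.sqrt QS := by
    have h2 : (∑ x, uS x / nS * ΔS x) ^ 2 ≤ QS := by
      have := my_cs (fun x => uS x / nS) ΔS (fun x => by have := huS0 x; positivity)
      simpa [hwsumS] using this
    calc -(∑ x, uS x / nS * ΔS x) ≤ |∑ x, uS x / nS * ΔS x| := neg_le_abs _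
      _ = Real.sqrt ((∑ x, uS x / nS * ΔS x) ^ 2) := (Real.sqrt_sq_eq_abs _).symm
      _ ≤ Real.sqrt QS := Real.sqrt_le_sqrt h2
  -- step 2: Q bounds
  set β : ℝ := min (nS / μS) (nT / μT) with hβdef
  set μ : ℝ := min μS μT with hμdef
  have hβ0 : 0 < β := lt_min (by positivity) (by positivity)
  have hμ0 : 0 < μ := lt_min hμS hμT
  have hQAT : QT ≤ AT / β := by
    have h1 : QT ≤ μT / nT * AT := by
      rw [Finset.mul_sum]
      refine Finset.sum_le_sum fun x _ => ?_
      have : μT / nT * (vT x / μT * ΔT x ^ 2) = vT x / nT * ΔT x ^ 2 := by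
        field_simp
      rw [this]
      have := huvT x
      gcongr
    have hc : μT / nT ≤ 1 / β := by
      rw [div_le_div_iff₀ hnT hβ0]
      have h : β ≤ nT / μT := min_le_right _ _
      rw [le_div_iff₀ hμT] at h
      nlinarith
    have h2 : μT / nT * AT ≤ AT / β :=
      (mul_le_mul_of_nonneg_right hc hAT0).trans_eq (by ring)
    exact h1.trans h2
  have hQAS : QS ≤ AS / β := by
    have h1 : QS ≤ μS / nS * AS := by
      rw [Finset.mul_sum]
      refine Finset.sum_le_sum fun x _ => ?_
      have : μS / nS * (vS x / μS * ΔS x ^ 2) = vS x / nS * ΔS x ^ 2 := by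
        field_simp
      rw [this]
      have := huvS x
      gcongr
    have hc : μS / nS ≤ 1 / β := by
      rw [div_le_div_iff₀ hnS hβ0]
      have h : β ≤ nS / μS := min_le_left _ _
      rw [le_div_iff₀ hμS] at h
      nlinarith
    have h2 : μS / nS * AS ≤ AS / β :=
      (mul_le_mul_of_nonneg_right hc hAS0).trans_eq (by ring)
    exact h1.trans h2
  have hL : AT + AS ≤ (μT * AT + μS * AS) / μ := by
    rw [le_div_iff₀ hμ0]
    have h1 : μ * AT ≤ μT * AT := by
      have : μ ≤ μT := min_le_right _ _
      gcongr
    have h2 : μ * AS ≤ μS * AS := by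
      have : μ ≤ μS := min_le_left _ _
      gcongr
    nlinarith
  have hfinal : 2 * (QT + QS) ≤ 2 * (μT * AT + μS * AS) / (μ * β) := by
    have hstep : QT + QS ≤ (μT * AT + μS * AS) / (μ * β) := by
      calc QT + QS ≤ AT / β + AS / β := add_le_add hQAT hQAS
        _ = (AT + AS) / β := by rw [← add_div]
        _ ≤ ((μT * AT + μS * AS) / μ) / β := by gcongr
        _ = (μT * AT + μS * AS) / (μ * β) := by rw [div_div]
    calc 2 * (QT + QS) ≤ 2 * ((μT * AT + μS * AS) / (μ * β)) := by linarith
      _ = 2 * (μT * AT + μS * AS) / (μ * β) := by ring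
  calc (∑ x, uT x / nT * ΔT x) - (∑ x, uS x / nS * ΔS x)
      ≤ Real.sqrt QT + Real.sqrt QS := by
        have := haT; have := haS; linarith
    _ ≤ Real.sqrt (2 * (QT + QS)) := my_sqrt_add hQT0 hQS0
    _ ≤ Real.sqrt (2 * (μT * AT + μS * AS) / (μ * β)) := Real.sqrt_le_sqrt hfinal

/-- Group `T` is `G ω = true`, group `S` is `G ω = false`. -/
theorem stmt8 {Ω 𝒳 : Type*} [Fintype Ω] [Fintype 𝒳] [DecidableEq 𝒳]
    (p : Ω → ℝ) (Xv : Ω → 𝒳) (G Y : Ω → Bool)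
    (hp : ∀ ω, 0 ≤ p ω) (hp1 : ∑ ω, p ω = 1)
    (hμT : 0 < prMass p (fun ω => G ω = true))
    (hμS : 0 < prMass p (fun ω => G ω = false))
    (hβT : 0 < condPr p (fun ω => Y ω = true) (fun ω => G ω = true))
    (hβS : 0 < condPr p (fun ω => Y ω = true) (fun ω => G ω = false))
    (Δ : 𝒳 → Bool → ℝ) :
    (∑ x, condPr p (fun ω => Xv ω = x) (fun ω => Y ω = true ∧ G ω = true) * Δ x true) -
      (∑ x, condPr p (fun ω => Xv ω = x) (fun ω => Y ω = true ∧ G ω = false) * Δ x false) ≤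
    Real.sqrt (2 *
      (prMass p (fun ω => G ω = true) *
          ∑ x, condPr p (fun ω => Xv ω = x) (fun ω => G ω = true) * (Δ x true) ^ 2 +
        prMass p (fun ω => G ω = false) *
          ∑ x, condPr p (fun ω => Xv ω = x) (fun ω => G ω = false) * (Δ x false) ^ 2) /
      (min (prMass p (fun ω => G ω = false)) (prMass p (fun ω => G ω = true)) *
        min (condPr p (fun ω => Y ω = true) (fun ω => G ω = false))
            (condPr p (fun ω => Y ω = true) (fun ω => G ω = true)))) := by
  have hnT : 0 < prMass p (fun ω => Y ω = true ∧ G ω = true) := by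
    by_contra hle
    push_neg at hle
    have h : condPr p (fun ω => Y ω = true) (fun ω => G ω = true) ≤ 0 :=
      div_nonpos_of_nonpos_of_nonneg hle hμT.le
    exact absurd h (not_le.mpr hβT)
  have hnS : 0 < prMass p (fun ω => Y ω = true ∧ G ω = false) := by
    by_contra hle
    push_neg at hle
    have h : condPr p (fun ω => Y ω = true) (fun ω => G ω = false) ≤ 0 :=
      div_nonpos_of_nonpos_of_nonneg hle hμS.le
    exact absurd h (not_le.mpr hβS)
  exact my_key
    (fun x => prMass p (fun ω => Xv ω = x ∧ (Y ω = true ∧ G ω = true)))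
    (fun x => prMass p (fun ω => Xv ω = x ∧ G ω = true))
    (fun x => prMass p (fun ω => Xv ω = x ∧ (Y ω = true ∧ G ω = false)))
    (fun x => prMass p (fun ω => Xv ω = x ∧ G ω = false))
    (prMass p (fun ω => G ω = true)) (prMass p (fun ω => G ω = false))
    (prMass p (fun ω => Y ω = true ∧ G ω = true))
    (prMass p (fun ω => Y ω = true ∧ G ω = false))
    (fun x => Δ x true) (fun x => Δ x false)
    hμT hμS hnT hnS
    (fun x => my_prMass_nonneg p _ hp)
    (fun x => my_prMass_mono p _ _ hp (fun ω h => ⟨h.1, h.2.2⟩))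
    (my_sum_fiber p Xv _)
    (fun x => my_prMass_nonneg p _ hp)
    (fun x => my_prMass_mono p _ _ hp (fun ω h => ⟨h.1, h.2.2⟩))
    (my_sum_fiber p Xv _)
end

section
/- Theorem (Bayes optimal predictor is 1-fair for squared loss): In a finite population with groups S, T having positive masses and positive base rates, let h* (x,g) = E[y | x, g] be the Bayes optimal predictor for the squared loss, and suppose without loss of generality its directed imbalance Imb(h*) = E[h*| y=1, T] − E[h* | y=1, S] is nonnegative. Then for every predictor h : X × {S,T} → [0,1]: Imb(h*) − Imb(h) ≤ sqrt(2·(ℓ(h) − ℓ(h*)) / (μβ)), where ℓ is the squared loss, μ = min(P(G=S), P(G=T)), and β = min over g of P(Y=1|G=g). -/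
/-- Conditional expectation of `f` given event `A`. -/
noncomputable def condExp' {Ω : Type*} [Fintype Ω] (p : Ω → ℝ) (A : Ω → Prop)
    [DecidablePred A] (f : Ω → ℝ) : ℝ :=
  (∑ ω, if A ω then p ω * f ω else 0) / prMass p A

/-- Directed imbalance (T → S) of a random score `f`: expected score on positives of `T`
(`G = true`) minus on positives of `S` (`G = false`). -/
noncomputable def Imb {Ω : Type*} [Fintype Ω] (p : Ω → ℝ) (G Y : Ω → Bool)
    (f : Ω → ℝ) : ℝ :=
  condExp' p (fun ω => Y ω = true ∧ G ω = true) f -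
    condExp' p (fun ω => Y ω = true ∧ G ω = false) f

/-- Squared loss of a predictor `h : 𝒳 × {S,T} → [0,1]`. -/
noncomputable def sqLoss9 {Ω 𝒳 : Type*} [Fintype Ω] (p : Ω → ℝ) (Xv : Ω → 𝒳)
    (G Y : Ω → Bool) (h : 𝒳 → Bool → ℝ) : ℝ :=
  ∑ ω, p ω * (h (Xv ω) (G ω) - (if Y ω = true then 1 else 0)) ^ 2

lemma condExp'_sub {Ω : Type*} [Fintype Ω] (p : Ω → ℝ) (A : Ω → Prop) [DecidablePred A]
    (f g : Ω → ℝ) :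
    condExp' p A f - condExp' p A g = condExp' p A (fun ω => f ω - g ω) := by
  unfold condExp'
  rw [← sub_div]
  congr 1
  rw [← Finset.sum_sub_distrib]
  apply Finset.sum_congr rfl
  intro ω _
  split <;> ring

lemma condExp'_abs_le {Ω : Type*} [Fintype Ω] (p : Ω → ℝ) (A : Ω → Prop) [DecidablePred A]
    (hp : ∀ ω, 0 ≤ p ω) (hm : 0 < prMass p A) (f : Ω → ℝ) :
    |condExp' p A f| ≤
      Real.sqrt ((∑ ω, if A ω then p ω * f ω ^ 2 else 0) / prMass p A) := by
  set m := prMass p A with hmdef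
  set T := ∑ ω, if A ω then p ω * f ω else 0 with hT
  set S := ∑ ω, if A ω then p ω * f ω ^ 2 else 0 with hS
  have key : T ^ 2 ≤ m * S := by
    have := Finset.sum_mul_sq_le_sq_mul_sq Finset.univ
      (fun ω => if A ω then Real.sqrt (p ω) else 0)
      (fun ω => if A ω then Real.sqrt (p ω) * f ω else 0)
    have e1 : ∑ ω, (if A ω then Real.sqrt (p ω) else 0) *
        (if A ω then Real.sqrt (p ω) * f ω else 0) = T := by
      apply Finset.sum_congr rfl; intro ω _
      split
      · rw [← mul_assoc, Real.mul_self_sqrt (hp ω)]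
      · ring
    have e2 : ∑ ω, (if A ω then Real.sqrt (p ω) else 0) ^ 2 = m := by
      apply Finset.sum_congr rfl; intro ω _
      split
      · rw [Real.sq_sqrt (hp ω)]
      · ring
    have e3 : ∑ ω, (if A ω then Real.sqrt (p ω) * f ω else 0) ^ 2 = S := by
      apply Finset.sum_congr rfl; intro ω _
      split
      · rw [mul_pow, Real.sq_sqrt (hp ω)]
      · ring
    rw [e1, e2, e3] at this
    exact this
  have : (T / m) ^ 2 ≤ S / m := by
    rw [div_pow, div_le_div_iff₀ (by positivity) hm]
    nlinarith [sq_nonneg T]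
  exact Real.abs_le_sqrt (by simpa [condExp', ← hT, ← hmdef] using this)

lemma orth_lemma {Ω 𝒳 : Type*} [Fintype Ω] [DecidableEq 𝒳]
    (p : Ω → ℝ) (Xv : Ω → 𝒳) (G Y : Ω → Bool)
    (hp : ∀ ω, 0 ≤ p ω)
    (hstar : 𝒳 → Bool → ℝ)
    (hstardef : ∀ x g, hstar x g =
      condExp' p (fun ω => Xv ω = x ∧ G ω = g) (fun ω => if Y ω = true then 1 else 0))
    (c : 𝒳 → Bool → ℝ) :
    ∑ ω, p ω * ((hstar (Xv ω) (G ω) - (if Y ω = true then 1 else 0)) * c (Xv ω) (G ω))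
      = 0 := by
  classical
  rw [← Finset.sum_fiberwise_of_maps_to
    (g := fun ω => (Xv ω, G ω)) (t := Finset.univ.image fun ω => (Xv ω, G ω))
    (fun ω _ => Finset.mem_image_of_mem _ (Finset.mem_univ ω))]
  apply Finset.sum_eq_zero
  intro b _
  set s := Finset.univ.filter (fun ω => (Xv ω, G ω) = b) with hs
  have hmem : ∀ ω ∈ s, Xv ω = b.1 ∧ G ω = b.2 := by
    intro ω hω
    rw [hs, Finset.mem_filter] at hω
    exact Prod.ext_iff.mp hω.2
  have e : ∑ ω ∈ s, p ω * ((hstar (Xv ω) (G ω) - (if Y ω = true then 1 else 0)) *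
      c (Xv ω) (G ω)) =
      c b.1 b.2 * (hstar b.1 b.2 * (∑ ω ∈ s, p ω) -
        ∑ ω ∈ s, p ω * (if Y ω = true then 1 else 0)) := by
    have e1 : ∑ ω ∈ s, p ω * ((hstar (Xv ω) (G ω) - (if Y ω = true then 1 else 0)) *
        c (Xv ω) (G ω)) =
        ∑ ω ∈ s, ((c b.1 b.2 * hstar b.1 b.2) * p ω -
          c b.1 b.2 * (p ω * (if Y ω = true then 1 else 0))) := by
      apply Finset.sum_congr rfl
      intro ω hω
      obtain ⟨h1, h2⟩ := hmem ω hω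
      rw [h1, h2]; ring
    rw [e1, Finset.sum_sub_distrib, ← Finset.mul_sum, ← Finset.mul_sum]
    ring
  rw [e]
  have hM : (∑ ω ∈ s, p ω) = prMass p (fun ω => Xv ω = b.1 ∧ G ω = b.2) := by
    rw [prMass, hs]
    rw [Finset.sum_filter]
    apply Finset.sum_congr rfl
    intro ω _
    congr 1
    simp [Prod.ext_iff]
  have hN : (∑ ω ∈ s, p ω * (if Y ω = true then 1 else 0)) =
      ∑ ω, if (Xv ω = b.1 ∧ G ω = b.2) then p ω * (if Y ω = true then 1 else 0) else 0 := by
    rw [hs, Finset.sum_filter]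
    apply Finset.sum_congr rfl
    intro ω _
    congr 1
    simp [Prod.ext_iff]
  by_cases hM0 : prMass p (fun ω => Xv ω = b.1 ∧ G ω = b.2) = 0
  · -- all p vanish on the fiber
    have hz : ∀ ω, (if (Xv ω = b.1 ∧ G ω = b.2) then p ω else 0) = 0 := by
      have := (Finset.sum_eq_zero_iff_of_nonneg
        (f := fun ω => if (Xv ω = b.1 ∧ G ω = b.2) then p ω else 0)
        (s := Finset.univ) (by intro ω _; split; exacts [hp ω, le_rfl])).mp
      intro ω
      exact (this hM0) ω (Finset.mem_univ ω)
    have hzp : ∀ ω ∈ s, p ω = 0 := by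
      intro ω hω
      obtain ⟨h1, h2⟩ := hmem ω hω
      have := hz ω
      simpa [h1, h2] using this
    have hM' : (∑ ω ∈ s, p ω) = 0 := Finset.sum_eq_zero hzp
    have hN' : (∑ ω ∈ s, p ω * (if Y ω = true then 1 else 0)) = 0 :=
      Finset.sum_eq_zero (fun ω hω => by rw [hzp ω hω]; ring)
    rw [hM', hN']; ring
  · rw [hstardef b.1 b.2, condExp', hM, ← hN, div_mul_cancel₀ _ hM0]
    ring


/-- The Bayes optimal squared-loss predictor `h*(x,g) = E[y | x, g]` is 1-fair:
for every predictor `h`, `Imb(h*) − Imb(h) ≤ sqrt(2(ℓ(h) − ℓ(h*)) / (μβ))`. -/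
theorem stmt9 {Ω 𝒳 : Type*} [Fintype Ω] [DecidableEq 𝒳]
    (p : Ω → ℝ) (Xv : Ω → 𝒳) (G Y : Ω → Bool)
    (hp : ∀ ω, 0 ≤ p ω) (hp1 : ∑ ω, p ω = 1)
    (hμT : 0 < prMass p (fun ω => G ω = true))
    (hμS : 0 < prMass p (fun ω => G ω = false))
    (hTpos : 0 < prMass p (fun ω => Y ω = true ∧ G ω = true))
    (hSpos : 0 < prMass p (fun ω => Y ω = true ∧ G ω = false))
    (h : 𝒳 → Bool → ℝ) (hh : ∀ x g, h x g ∈ Set.Icc (0:ℝ) 1)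
    (hstar : 𝒳 → Bool → ℝ)
    (hstardef : ∀ x g, hstar x g =
      condExp' p (fun ω => Xv ω = x ∧ G ω = g) (fun ω => if Y ω = true then 1 else 0))
    (hImbpos : 0 ≤ Imb p G Y (fun ω => hstar (Xv ω) (G ω))) :
    Imb p G Y (fun ω => hstar (Xv ω) (G ω)) - Imb p G Y (fun ω => h (Xv ω) (G ω)) ≤
      Real.sqrt (2 * (sqLoss9 p Xv G Y h - sqLoss9 p Xv G Y hstar) /
        (min (prMass p (fun ω => G ω = false)) (prMass p (fun ω => G ω = true)) *
          min (prMass p (fun ω => Y ω = true ∧ G ω = false) /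
                prMass p (fun ω => G ω = false))
              (prMass p (fun ω => Y ω = true ∧ G ω = true) /
                prMass p (fun ω => G ω = true)))) := by
  classical
  set μS := prMass p (fun ω => G ω = false)
  set μT := prMass p (fun ω => G ω = true)
  set mS := prMass p (fun ω => Y ω = true ∧ G ω = false)
  set mT := prMass p (fun ω => Y ω = true ∧ G ω = true)
  set cβ := min μS μT * min (mS / μS) (mT / μT) with hcβ
  -- difference function
  set f : Ω → ℝ := fun ω => hstar (Xv ω) (G ω) - h (Xv ω) (G ω) with hf
  -- loss decomposition
  have hD : sqLoss9 p Xv G Y h - sqLoss9 p Xv G Y hstar = ∑ ω, p ω * f ω ^ 2 := by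
    have horth := orth_lemma p Xv G Y hp hstar hstardef (fun x g => hstar x g - h x g)
    unfold sqLoss9
    rw [← Finset.sum_sub_distrib]
    have : ∀ ω, p ω * (h (Xv ω) (G ω) - (if Y ω = true then 1 else 0)) ^ 2 -
        p ω * (hstar (Xv ω) (G ω) - (if Y ω = true then 1 else 0)) ^ 2 =
        p ω * f ω ^ 2 - 2 * (p ω * ((hstar (Xv ω) (G ω) - (if Y ω = true then 1 else 0)) *
          (hstar (Xv ω) (G ω) - h (Xv ω) (G ω)))) := by
      intro ω; simp only [hf]; ring
    rw [Finset.sum_congr rfl (fun ω _ => this ω), Finset.sum_sub_distrib,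
      ← Finset.mul_sum, horth]
    ring
  have hDnn : 0 ≤ ∑ ω, p ω * f ω ^ 2 :=
    Finset.sum_nonneg (fun ω _ => mul_nonneg (hp ω) (sq_nonneg _))
  -- group sums
  set ST := ∑ ω, if (Y ω = true ∧ G ω = true) then p ω * f ω ^ 2 else 0 with hST
  set SS := ∑ ω, if (Y ω = true ∧ G ω = false) then p ω * f ω ^ 2 else 0 with hSS
  have hSTnn : 0 ≤ ST := Finset.sum_nonneg (fun ω _ => by
    split; exacts [mul_nonneg (hp ω) (sq_nonneg _), le_rfl])
  have hSSnn : 0 ≤ SS := Finset.sum_nonneg (fun ω _ => by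
    split; exacts [mul_nonneg (hp ω) (sq_nonneg _), le_rfl])
  have hsum : ST + SS ≤ ∑ ω, p ω * f ω ^ 2 := by
    rw [← Finset.sum_add_distrib]
    apply Finset.sum_le_sum
    intro ω _
    have hpos : 0 ≤ p ω * f ω ^ 2 := mul_nonneg (hp ω) (sq_nonneg _)
    by_cases hy : Y ω = true
    · cases hg : G ω <;> simp [hy, hg, hpos]
    · simp [hy, hpos]
  -- rewrite LHS as condExp' differences
  have hL : Imb p G Y (fun ω => hstar (Xv ω) (G ω)) - Imb p G Y (fun ω => h (Xv ω) (G ω))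
      = condExp' p (fun ω => Y ω = true ∧ G ω = true) f -
        condExp' p (fun ω => Y ω = true ∧ G ω = false) f := by
    unfold Imb
    rw [← condExp'_sub, ← condExp'_sub]
    ring
  -- Cauchy–Schwarz bounds
  have hBT := condExp'_abs_le p (fun ω => Y ω = true ∧ G ω = true) hp hTpos f
  have hBS := condExp'_abs_le p (fun ω => Y ω = true ∧ G ω = false) hp hSpos f
  rw [hL]
  -- c bounds
  have hcβpos : 0 < cβ := by
    apply mul_pos (lt_min hμS hμT) (lt_min (div_pos hSpos hμS) (div_pos hTpos hμT))
  have hcT : cβ ≤ mT := by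
    calc cβ ≤ μT * (mT / μT) :=
          mul_le_mul (min_le_right _ _) (min_le_right _ _)
            (le_of_lt (lt_min (div_pos hSpos hμS) (div_pos hTpos hμT))) (le_of_lt hμT)
      _ = mT := by field_simp
  have hcS : cβ ≤ mS := by
    calc cβ ≤ μS * (mS / μS) :=
          mul_le_mul (min_le_left _ _) (min_le_left _ _)
            (le_of_lt (lt_min (div_pos hSpos hμS) (div_pos hTpos hμT))) (le_of_lt hμS)
      _ = mS := by field_simp
  -- main chain
  set a := ST / mT with ha
  set b := SS / mS with hb
  have hann : 0 ≤ a := div_nonneg hSTnn (le_of_lt hTpos)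
  have hbnn : 0 ≤ b := div_nonneg hSSnn (le_of_lt hSpos)
  have step1 : condExp' p (fun ω => Y ω = true ∧ G ω = true) f -
      condExp' p (fun ω => Y ω = true ∧ G ω = false) f ≤
      Real.sqrt a + Real.sqrt b := by
    have h1 : condExp' p (fun ω => Y ω = true ∧ G ω = true) f ≤ Real.sqrt a :=
      le_trans (le_abs_self _) hBT
    have h2 : -condExp' p (fun ω => Y ω = true ∧ G ω = false) f ≤ Real.sqrt b :=
      le_trans (neg_le_abs _) hBS
    linarith
  have step2 : Real.sqrt a + Real.sqrt b ≤ Real.sqrt (2 * (a + b)) := by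
    rw [← Real.sqrt_sq (by positivity : (0:ℝ) ≤ Real.sqrt a + Real.sqrt b)]
    apply Real.sqrt_le_sqrt
    nlinarith [Real.sq_sqrt hann, Real.sq_sqrt hbnn, sq_nonneg (Real.sqrt a - Real.sqrt b),
      Real.sqrt_nonneg a, Real.sqrt_nonneg b]
  have step3 : 2 * (a + b) ≤ 2 * (sqLoss9 p Xv G Y h - sqLoss9 p Xv G Y hstar) / cβ := by
    rw [hD, mul_div_assoc]
    have h1 : a ≤ ST / cβ := div_le_div_of_nonneg_left hSTnn hcβpos hcT
    have h2 : b ≤ SS / cβ := div_le_div_of_nonneg_left hSSnn hcβpos hcS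
    have h3 : ST / cβ + SS / cβ ≤ (∑ ω, p ω * f ω ^ 2) / cβ := by
      rw [← add_div]
      gcongr
    linarith
  calc condExp' p (fun ω => Y ω = true ∧ G ω = true) f -
      condExp' p (fun ω => Y ω = true ∧ G ω = false) f
      ≤ Real.sqrt a + Real.sqrt b := step1
    _ ≤ Real.sqrt (2 * (a + b)) := step2
    _ ≤ _ := Real.sqrt_le_sqrt step3
end

section
/- Existence of fair classifiers in the convex hull: Let H be a nonempty finite set of classifiers h : X × {S,T} → [0,1] in a finite population where both groups contain positive examples. Then the convex hull Δ(H) contains a classifier p such that either Imb(p) = 0, or Imb(p) has the same strict sign for all elements of H and p minimizes |Imb| over Δ(H). In particular, there exists p ∈ Δ(H) that is not γ-disqualified by any h ∈ H for any γ ≥ 0 (i.e., either Imb(p)=0 or no h ∈ H has strictly smaller directed imbalance than p). -/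
lemma condExp'_add {Ω : Type*} [Fintype Ω] (p : Ω → ℝ) (A : Ω → Prop)
    [DecidablePred A] (f g : Ω → ℝ) :
    condExp' p A (f + g) = condExp' p A f + condExp' p A g := by
  simp only [condExp', ← add_div]
  congr 1
  rw [← Finset.sum_add_distrib]
  exact Finset.sum_congr rfl fun ω _ => by simp only [Pi.add_apply]; split <;> ring

lemma condExp'_smul {Ω : Type*} [Fintype Ω] (p : Ω → ℝ) (A : Ω → Prop)
    [DecidablePred A] (c : ℝ) (f : Ω → ℝ) :
    condExp' p A (c • f) = c * condExp' p A f := by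
  simp only [condExp']
  rw [← mul_div_assoc]
  congr 1
  rw [Finset.mul_sum]
  exact Finset.sum_congr rfl fun ω _ => by
    simp only [Pi.smul_apply, smul_eq_mul]; split <;> ring

noncomputable def ImbL {Ω : Type*} [Fintype Ω] (p : Ω → ℝ) (G Y : Ω → Bool) :
    (Ω → ℝ) →ₗ[ℝ] ℝ where
  toFun := Imb p G Y
  map_add' f g := by simp only [Imb, condExp'_add]; ring
  map_smul' c f := by
    simp only [Imb, condExp'_smul, RingHom.id_apply, smul_eq_mul]; ring

lemma imb_hull_le {Ω : Type*} [Fintype Ω] (p : Ω → ℝ) (G Y : Ω → Bool)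
    (H : Finset (Ω → ℝ)) (m : ℝ) (hm : ∀ h ∈ H, m ≤ Imb p G Y h) :
    ∀ q ∈ convexHull ℝ (H : Set (Ω → ℝ)), m ≤ Imb p G Y q := by
  intro q hq
  have : Imb p G Y q = ImbL p G Y q := rfl
  rw [this]
  have himg : (ImbL p G Y) '' (convexHull ℝ (H : Set (Ω → ℝ)))
      = convexHull ℝ ((ImbL p G Y) '' (H : Set (Ω → ℝ))) :=
    (ImbL p G Y).image_convexHull _
  have hmem : (ImbL p G Y) q ∈ convexHull ℝ ((ImbL p G Y) '' (H : Set (Ω → ℝ))) := by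
    rw [← himg]; exact ⟨q, hq, rfl⟩
  have hsub : convexHull ℝ ((ImbL p G Y) '' (H : Set (Ω → ℝ))) ⊆ {x : ℝ | m ≤ x} := by
    apply convexHull_min
    · rintro x ⟨h, hh, rfl⟩; exact hm h hh
    · exact convex_Ici m
  exact hsub hmem

lemma imb_hull_ge {Ω : Type*} [Fintype Ω] (p : Ω → ℝ) (G Y : Ω → Bool)
    (H : Finset (Ω → ℝ)) (m : ℝ) (hm : ∀ h ∈ H, Imb p G Y h ≤ m) :
    ∀ q ∈ convexHull ℝ (H : Set (Ω → ℝ)), Imb p G Y q ≤ m := by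
  intro q hq
  have : Imb p G Y q = ImbL p G Y q := rfl
  rw [this]
  have himg : (ImbL p G Y) '' (convexHull ℝ (H : Set (Ω → ℝ)))
      = convexHull ℝ ((ImbL p G Y) '' (H : Set (Ω → ℝ))) :=
    (ImbL p G Y).image_convexHull _
  have hmem : (ImbL p G Y) q ∈ convexHull ℝ ((ImbL p G Y) '' (H : Set (Ω → ℝ))) := by
    rw [← himg]; exact ⟨q, hq, rfl⟩
  have hsub : convexHull ℝ ((ImbL p G Y) '' (H : Set (Ω → ℝ))) ⊆ {x : ℝ | x ≤ m} := by
    apply convexHull_min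
    · rintro x ⟨h, hh, rfl⟩; exact hm h hh
    · exact convex_Iic m
  exact hsub hmem

/-- The convex hull `Δ(H)` of a nonempty finite set of classifiers contains a classifier
that is either perfectly balanced, or whose imbalance has the same strict sign as that of
every element of `H` and which minimizes `|Imb|` over `Δ(H)` (hence is not γ-disqualified
by any element of `H`, for any γ ≥ 0). -/
theorem stmt11 {Ω : Type*} [Fintype Ω] (p : Ω → ℝ) (G Y : Ω → Bool)
    (hp : ∀ ω, 0 ≤ p ω) (hp1 : ∑ ω, p ω = 1)
    (hT : 0 < prMass p (fun ω => Y ω = true ∧ G ω = true))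
    (hS : 0 < prMass p (fun ω => Y ω = true ∧ G ω = false))
    (H : Finset (Ω → ℝ)) (hne : H.Nonempty)
    (hrange : ∀ h ∈ H, ∀ ω, h ω ∈ Set.Icc (0:ℝ) 1) :
    ∃ pc ∈ convexHull ℝ (H : Set (Ω → ℝ)),
      Imb p G Y pc = 0 ∨
      ((∀ h ∈ H, 0 < Imb p G Y h) ∧ 0 < Imb p G Y pc ∧
        ∀ q ∈ convexHull ℝ (H : Set (Ω → ℝ)), |Imb p G Y pc| ≤ |Imb p G Y q|) ∨
      ((∀ h ∈ H, Imb p G Y h < 0) ∧ Imb p G Y pc < 0 ∧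
        ∀ q ∈ convexHull ℝ (H : Set (Ω → ℝ)), |Imb p G Y pc| ≤ |Imb p G Y q|) := by
  by_cases h0 : ∃ h ∈ H, Imb p G Y h = 0
  · obtain ⟨h, hh, hz⟩ := h0
    exact ⟨h, subset_convexHull ℝ _ hh, Or.inl hz⟩
  push_neg at h0
  by_cases hpos : ∀ h ∈ H, 0 < Imb p G Y h
  · -- all positive: take the minimizer over H
    obtain ⟨h₀, hh₀, hmin⟩ := H.exists_min_image (Imb p G Y) hne
    refine ⟨h₀, subset_convexHull ℝ _ hh₀, Or.inr (Or.inl ⟨hpos, hpos h₀ hh₀, ?_⟩)⟩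
    intro q hq
    have hle := imb_hull_le p G Y H (Imb p G Y h₀) hmin q hq
    calc |Imb p G Y h₀| = Imb p G Y h₀ := abs_of_pos (hpos h₀ hh₀)
      _ ≤ Imb p G Y q := hle
      _ ≤ |Imb p G Y q| := le_abs_self _
  by_cases hneg : ∀ h ∈ H, Imb p G Y h < 0
  · obtain ⟨h₀, hh₀, hmax⟩ := H.exists_max_image (Imb p G Y) hne
    refine ⟨h₀, subset_convexHull ℝ _ hh₀, Or.inr (Or.inr ⟨hneg, hneg h₀ hh₀, ?_⟩)⟩
    intro q hq
    have hle := imb_hull_ge p G Y H (Imb p G Y h₀) hmax q hq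
    calc |Imb p G Y h₀| = -(Imb p G Y h₀) := abs_of_neg (hneg h₀ hh₀)
      _ ≤ -(Imb p G Y q) := by linarith
      _ ≤ |Imb p G Y q| := neg_le_abs _
  · -- mixed signs: find a balanced convex combination
    push_neg at hpos hneg
    obtain ⟨h₂, hh₂, hb⟩ := hpos
    obtain ⟨h₁, hh₁, ha⟩ := hneg
    set a := Imb p G Y h₁ with ha_def
    set b := Imb p G Y h₂ with hb_def
    have ha' : 0 < a := lt_of_le_of_ne ha (Ne.symm (h0 h₁ hh₁))
    have hb' : b < 0 := lt_of_le_of_ne hb (h0 h₂ hh₂)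
    have hab : 0 < a - b := by linarith
    set s := a / (a - b) with hs_def
    set t := (-b) / (a - b) with ht_def
    have hs0 : 0 ≤ s := div_nonneg ha'.le hab.le
    have ht0 : 0 ≤ t := div_nonneg (by linarith) hab.le
    have hst : t + s = 1 := by
      rw [ht_def, hs_def, ← add_div, div_eq_one_iff_eq hab.ne']; ring
    refine ⟨t • h₁ + s • h₂, ?_, Or.inl ?_⟩
    · exact (convex_convexHull ℝ _) (subset_convexHull ℝ _ hh₁)
        (subset_convexHull ℝ _ hh₂) ht0 hs0 hst
    · have : Imb p G Y (t • h₁ + s • h₂) = t * a + s * b := by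
        have := (ImbL p G Y).map_add (t • h₁) (s • h₂)
        have h1 := (ImbL p G Y).map_smul t h₁
        have h2 := (ImbL p G Y).map_smul s h₂
        show ImbL p G Y (t • h₁ + s • h₂) = t * a + s * b
        rw [this, h1, h2]; rfl
      rw [this, ht_def, hs_def]
      field_simp
      ring
end

section
/- Impossibility for the 0/1 loss: Suppose the feature space is trivial (predictions depend only on group), groups S and T have masses μ_S, μ_T > 0, and base rates β_T = 1/2 + τ, β_S = 1/2 − τ for τ ∈ (0, 1/2). The Bayes optimal 0/1-loss classifier predicts 1 on T and 0 on S, with imbalance 1. The squared-loss Bayes optimal classifier h₂ (predicting β_g on group g) satisfies: Imb(h_{0/1}) − Imb(h₂) = 1 − 2τ and ℓ₀₁(h₂) − ℓ₀₁(h_{0/1}) = 2τ·(μ_S β_S + μ_T(1−β_T)). Consequently, for any function F : [0,1] → ℝ with F(0)=0 that is continuous at 0, there exists τ > 0 such that 1 − 2τ > F(ℓ₀₁(h₂) − ℓ₀₁(h_{0/1})); hence no legal scaling function makes the 0/1-Bayes classifier 1-fair. -/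
/-- Expected 0/1 loss of a randomized classifier predicting `pS` on group `S`
(mass `μS`, base rate `βS`) and `pT` on group `T` (mass `μT`, base rate `βT`). -/
noncomputable def loss01 (μS μT βS βT pS pT : ℝ) : ℝ :=
  μS * (pS * (1 - βS) + (1 - pS) * βS) + μT * (pT * (1 - βT) + (1 - pT) * βT)

/-- With trivial features and base rates `1/2 ± τ`, the 0/1-Bayes classifier (predict 1 on T,
0 on S) has imbalance 1 and the squared-loss Bayes classifier (predict the base rate) has
imbalance `2τ`; their imbalance difference is `1 − 2τ` and 0/1-loss difference is
`2τ(μS βS + μT(1−βT))`. Consequently no scaling function vanishing and continuous at 0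
can prevent disqualification for all small τ. -/
theorem stmt13 (μS μT : ℝ) (hμS : 0 < μS) (hμT : 0 < μT) (hsum : μS + μT = 1)
    (F : ℝ → ℝ) (hF0 : F 0 = 0) (hFc : ContinuousAt F 0) :
    (∀ τ ∈ Set.Ioo (0:ℝ) (1/2),
      ((1:ℝ) - 0) - ((1/2 + τ) - (1/2 - τ)) = 1 - 2 * τ ∧
      loss01 μS μT (1/2 - τ) (1/2 + τ) (1/2 - τ) (1/2 + τ) -
          loss01 μS μT (1/2 - τ) (1/2 + τ) 0 1 =
        2 * τ * (μS * (1/2 - τ) + μT * (1 - (1/2 + τ)))) ∧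
    ∃ τ ∈ Set.Ioo (0:ℝ) (1/2),
      1 - 2 * τ > F (loss01 μS μT (1/2 - τ) (1/2 + τ) (1/2 - τ) (1/2 + τ) -
        loss01 μS μT (1/2 - τ) (1/2 + τ) 0 1) := by
  have key : ∀ τ : ℝ, loss01 μS μT (1/2 - τ) (1/2 + τ) (1/2 - τ) (1/2 + τ) -
      loss01 μS μT (1/2 - τ) (1/2 + τ) 0 1 = τ * (1 - 2*τ) := by
    intro τ
    simp only [loss01]
    linear_combination (τ - 2*τ^2) * hsum
  constructor
  · intro τ _
    refine ⟨by ring, ?_⟩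
    rw [key]
    linear_combination (2*τ^2 - τ) * hsum
  · obtain ⟨δ, hδpos, hδ⟩ := Metric.continuousAt_iff.mp hFc (1/2) (by norm_num)
    set τ : ℝ := min δ (1/4) / 2 with hτdef
    have hτpos : 0 < τ := by positivity
    have hτle : τ ≤ 1/8 := by
      have := min_le_right δ (1/4); simp only [hτdef]; linarith
    refine ⟨τ, ⟨hτpos, by linarith⟩, ?_⟩
    rw [key]
    have hx : |τ * (1 - 2*τ) - 0| < δ := by
      have h1 : τ < δ := by
        have := min_le_left δ (1/4)
        have : δ / 2 ≤ τ ∨ τ ≤ δ/2 := le_total _ _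
        simp only [hτdef]
        rcases le_total δ (1/4) with h | h
        · rw [min_eq_left h]; linarith
        · rw [min_eq_right h]; linarith
      have h2 : 0 < 1 - 2*τ := by linarith
      rw [sub_zero, abs_of_nonneg (by nlinarith)]
      nlinarith
    have := hδ hx
    rw [hF0, Real.dist_eq, sub_zero] at this
    have := abs_lt.mp this
    linarith
end

section
/- Lemma (γ-fairness of the γ-interpolation): Let h₁ be 1-fair, meaning Imb(h₁) ≤ f₁(ℓ(h₀) − ℓ(h₁)) where f_γ(a) = sqrt(2γa/(μβ)) and h₀ is perfectly balanced (Imb(h₀) = 0). For 0 ≤ a ≤ b ≤ 1 let h_α = α h₁ + (1-α) h₀. If γ ≥ b then Imb(h_b) − Imb(h_a) ≤ f_γ(ℓ(h_a) − ℓ(h_b)), i.e., h_a does not γ-disqualify h_b. -/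
/-- Squared loss of predictor `g` when the conditional label expectation is `h₁`. -/
noncomputable def sqLoss {Ω : Type*} [Fintype Ω] (p h₁ g : Ω → ℝ) : ℝ :=
  ∑ ω, p ω * (h₁ ω * (1 - g ω) ^ 2 + (1 - h₁ ω) * (g ω) ^ 2)

lemma condExp'_lin {Ω : Type*} [Fintype Ω] (p : Ω → ℝ) (A : Ω → Prop) [DecidablePred A]
    (c d : ℝ) (f g : Ω → ℝ) :
    condExp' p A (fun ω => c * f ω + d * g ω) =
      c * condExp' p A f + d * condExp' p A g := by
  unfold condExp'
  rw [mul_div_assoc', mul_div_assoc', ← add_div]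
  congr 1
  rw [Finset.mul_sum, Finset.mul_sum, ← Finset.sum_add_distrib]
  refine Finset.sum_congr rfl fun ω _ => ?_
  by_cases h : A ω <;> simp [h] <;> ring

lemma Imb_lin {Ω : Type*} [Fintype Ω] (p : Ω → ℝ) (G Y : Ω → Bool)
    (c d : ℝ) (f g : Ω → ℝ) :
    Imb p G Y (fun ω => c * f ω + d * g ω) = c * Imb p G Y f + d * Imb p G Y g := by
  unfold Imb
  rw [condExp'_lin, condExp'_lin]; ring

lemma sqLoss_eq {Ω : Type*} [Fintype Ω] (p h₁ g : Ω → ℝ) :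
    sqLoss p h₁ g = sqLoss p h₁ h₁ + ∑ ω, p ω * (g ω - h₁ ω) ^ 2 := by
  unfold sqLoss
  rw [← Finset.sum_add_distrib]
  exact Finset.sum_congr rfl fun ω _ => by ring

/-- If `h₁` is 1-fair (w.r.t. the scaling `f_γ(a) = sqrt(2γa/(μβ))`) and `h₀` is perfectly
balanced, then for `0 ≤ a ≤ b ≤ 1 ≥`, `γ ≥ b`, the interpolation `h_a` does not
γ-disqualify `h_b`. -/
theorem stmt14 {Ω : Type*} [Fintype Ω] (p : Ω → ℝ) (G Y : Ω → Bool) (h₀ h₁ : Ω → ℝ)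
    (μ β γ a b : ℝ)
    (hp : ∀ ω, 0 ≤ p ω) (hp1 : ∑ ω, p ω = 1)
    (hμ : 0 < μ) (hβ : 0 < β)
    (hT : 0 < prMass p (fun ω => Y ω = true ∧ G ω = true))
    (hS : 0 < prMass p (fun ω => Y ω = true ∧ G ω = false))
    (hh₀ : ∀ ω, h₀ ω ∈ Set.Icc (0:ℝ) 1) (hh₁ : ∀ ω, h₁ ω ∈ Set.Icc (0:ℝ) 1)
    (hbal : Imb p G Y h₀ = 0)
    (h1fair : Imb p G Y h₁ ≤
      Real.sqrt (2 * 1 * (sqLoss p h₁ h₀ - sqLoss p h₁ h₁) / (μ * β)))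
    (h0a : 0 ≤ a) (hab : a ≤ b) (hb1 : b ≤ 1) (hγ : b ≤ γ) :
    Imb p G Y (fun ω => b * h₁ ω + (1 - b) * h₀ ω) -
        Imb p G Y (fun ω => a * h₁ ω + (1 - a) * h₀ ω) ≤
      Real.sqrt (2 * γ *
        (sqLoss p h₁ (fun ω => a * h₁ ω + (1 - a) * h₀ ω) -
          sqLoss p h₁ (fun ω => b * h₁ ω + (1 - b) * h₀ ω)) / (μ * β)) := by
  set I := Imb p G Y h₁ with hI
  set D := ∑ ω, p ω * (h₀ ω - h₁ ω) ^ 2 with hDdef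
  have hD0 : 0 ≤ D := Finset.sum_nonneg fun ω _ => mul_nonneg (hp ω) (sq_nonneg _)
  have hDid : sqLoss p h₁ h₀ - sqLoss p h₁ h₁ = D := by rw [sqLoss_eq p h₁ h₀]; ring
  have hLoss : ∀ c : ℝ, sqLoss p h₁ (fun ω => c * h₁ ω + (1 - c) * h₀ ω) =
      sqLoss p h₁ h₁ + (1 - c) ^ 2 * D := by
    intro c
    rw [sqLoss_eq p h₁ _, hDdef, Finset.mul_sum]
    congr 1
    exact Finset.sum_congr rfl fun ω _ => by ring
  have hImb : ∀ c : ℝ, Imb p G Y (fun ω => c * h₁ ω + (1 - c) * h₀ ω) = c * I := by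
    intro c
    rw [Imb_lin, hbal, ← hI]; ring
  rw [hImb a, hImb b, hLoss a, hLoss b]
  have h2ab : (0:ℝ) ≤ 2 - a - b := by nlinarith
  have hkey : (b - a) ^ 2 ≤ γ * (b - a) * (2 - a - b) := by
    nlinarith [mul_nonneg (sub_nonneg.2 hab)
        (mul_nonneg (add_nonneg h0a (h0a.trans hab)) (sub_nonneg.2 hb1)),
      mul_nonneg (sub_nonneg.2 hγ) (mul_nonneg h2ab (sub_nonneg.2 hab))]
  have hR0 : 0 ≤ 2 * γ * ((sqLoss p h₁ h₁ + (1 - a) ^ 2 * D) -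
      (sqLoss p h₁ h₁ + (1 - b) ^ 2 * D)) / (μ * β) := by
    apply div_nonneg _ (le_of_lt (mul_pos hμ hβ))
    nlinarith [mul_nonneg (mul_nonneg (sub_nonneg.2 hab) (by nlinarith : (0:ℝ) ≤ 2 - a - b)) hD0]
  rcases le_or_gt I 0 with hI0 | hI0
  · refine le_trans ?_ (Real.sqrt_nonneg _)
    nlinarith [mul_nonpos_of_nonneg_of_nonpos (sub_nonneg.2 hab) hI0]
  · have hE0 : (0:ℝ) ≤ 2 * D / (μ * β) := by positivity
    have hI2 : I ^ 2 ≤ 2 * D / (μ * β) := by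
      have := h1fair
      rw [hDid] at this
      have h2 : I ≤ Real.sqrt (2 * D / (μ * β)) := by
        convert this using 2; ring
      nlinarith [Real.sq_sqrt hE0, Real.sqrt_nonneg (2 * D / (μ * β)), hI0.le]
    rw [show b * I - a * I = (b - a) * I by ring,
      ← Real.sqrt_sq (mul_nonneg (sub_nonneg.2 hab) hI0.le)]
    apply Real.sqrt_le_sqrt
    have hrw : 2 * γ * ((sqLoss p h₁ h₁ + (1 - a) ^ 2 * D) -
        (sqLoss p h₁ h₁ + (1 - b) ^ 2 * D)) / (μ * β) =
        γ * (b - a) * (2 - a - b) * (2 * D / (μ * β)) := by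
      field_simp; ring
    rw [hrw]
    have h1 : (b - a) ^ 2 * I ^ 2 ≤ (γ * (b - a) * (2 - a - b)) * (2 * D / (μ * β)) :=
      mul_le_mul hkey hI2 (sq_nonneg I) (le_trans (sq_nonneg _) hkey)
    nlinarith [h1]
end

section
/- The constant classifier disqualifies the 0/1 Bayes classifier at small base-rate gaps: with trivial features, β_T = 1/2 + τ, β_S = 1/2 − τ (0 < τ < 1/2), groups of equal mass 1/2, the constant predictor h(x) = 1/2 has imbalance 0 and expected 0/1 loss exactly 1/2, while the Bayes optimal 0/1 classifier has imbalance 1 and expected 0/1 loss 1/2 − τ. Hence the improvement in imbalance is 1 and the cost in loss is τ, and for any fixed γ and any legal scaling function f_γ that is continuous at 0 with f_γ(0) = 0, there exists τ > 0 with 1 > f_γ(τ), i.e., the constant classifier γ-disqualifies the Bayes classifier. -/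
/-- Expected 0/1 loss of a randomized classifier predicting `pS` on group `S`
(base rate `1/2 − τ`) and `pT` on group `T` (base rate `1/2 + τ`), each of mass `1/2`. -/
noncomputable def loss01eq (τ pS pT : ℝ) : ℝ :=
  (1/2) * (pS * (1 - (1/2 - τ)) + (1 - pS) * (1/2 - τ)) +
    (1/2) * (pT * (1 - (1/2 + τ)) + (1 - pT) * (1/2 + τ))

/-- The constant-1/2 classifier has imbalance 0 and loss 1/2; the 0/1-Bayes classifier
(predict 1 on T, 0 on S) has imbalance 1 and loss `1/2 − τ`. For any legal scaling
function `F` (with `F 0 = 0`, continuous at 0) there is `τ > 0` with `1 > F(τ)`,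
so the constant classifier γ-disqualifies the Bayes classifier. -/
theorem stmt19 (F : ℝ → ℝ) (hF0 : F 0 = 0) (hFc : ContinuousAt F 0) :
    (∀ τ ∈ Set.Ioo (0:ℝ) (1/2),
      ((1/2 : ℝ) - 1/2 = 0) ∧ loss01eq τ (1/2) (1/2) = 1/2 ∧
      ((1:ℝ) - 0 = 1) ∧ loss01eq τ 0 1 = 1/2 - τ) ∧
    ∃ τ ∈ Set.Ioo (0:ℝ) (1/2),
      1 > F (loss01eq τ (1/2) (1/2) - loss01eq τ 0 1) := by
  constructor
  · intro τ _
    refine ⟨by norm_num, by unfold loss01eq; ring, by norm_num, by unfold loss01eq; ring⟩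
  · have h := Metric.continuousAt_iff.mp hFc 1 one_pos
    obtain ⟨δ, hδ, hball⟩ := h
    set τ := min (δ/2) (1/4) with hτ
    have hτpos : 0 < τ := lt_min (by linarith) (by norm_num)
    have hτlt : τ < 1/2 := lt_of_le_of_lt (min_le_right _ _) (by norm_num)
    refine ⟨τ, ⟨hτpos, hτlt⟩, ?_⟩
    have heq : loss01eq τ (1/2) (1/2) - loss01eq τ 0 1 = τ := by
      unfold loss01eq; ring
    rw [heq]
    have hd : dist τ 0 < δ := by
      rw [Real.dist_eq, sub_zero, abs_of_pos hτpos]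
      exact lt_of_le_of_lt (min_le_left _ _) (by linarith)
    have := hball hd
    rw [hF0, Real.dist_eq, sub_zero] at this
    calc F τ ≤ |F τ| := le_abs_self _
      _ < 1 := this
end
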